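/- Let ħ>0 and E∈ℝ, and let u₁,u₂:ℝ→ℂ both be square-integrable, continuously differentiable on ℝ, twice differentiable on each of the open intervals (−∞,0), (0,ℓ), (ℓ,∞), and satisfy −(ħ²/(2m))·uᵢ''(x) + V(x)·uᵢ(x) = E·uᵢ(x) on those intervals (i=1,2). Then u₁ and u₂ are linearly dependent: there exist complex numbers (c₁,c₂)≠(0,0) with c₁u₁ + c₂u₂ ≡ 0. In particular, every eigenvalue of the operator −(ħ²/2m)d²/dx² + V is simple. -/

import Mathlib

/-!
With `k = 2m(V - E)/ħ²`, both solutions satisfy `u'' = k u` on all of `ℝ`: the equation extends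
across `0` and `ℓ` because `u'` and `k u` are continuous there. Hence their Wronskian
`u₁ u₂' - u₂ u₁'` is constant. Beyond some `x₀` the potential exceeds `E`, i.e. `k ≥ 0`, and there
`⟪u, u'⟫` is nondecreasing; square integrability forces it to stay `≤ 0`. So `‖u‖²` and `‖u'‖²`
are eventually nonincreasing: `u → 0` while `u'` stays bounded, and the Wronskian tends to `0`,
hence vanishes. A vanishing Wronskian yields a nontrivial combination of `u₁, u₂` with zero Cauchy
data at a point, which vanishes identically by uniqueness for the linear equation.
-/

open MeasureTheory Set Filter Topology
open scoped RealInnerProductSpace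

lemma hasDerivAt_of_hasDerivAt_of_notMem_finite {E : Type*} [NormedAddCommGroup E]
    [NormedSpace ℝ E] {f g : ℝ → E} {s : Set ℝ} (hs : s.Finite)
    (hfg : ∀ x ∉ s, HasDerivAt f (g x) x) (hf : Continuous f) (hg : Continuous g) (x : ℝ) :
    HasDerivAt f (g x) x := by
  have hnear : sᶜ ∈ 𝓝[≠] x := by
    filter_upwards [nhdsWithin_le_nhds ((hs.sdiff (t := {x})).isClosed.compl_mem_nhds (by simp)),
      self_mem_nhdsWithin] with y hy hyx
    exact fun h => hy ⟨h, hyx⟩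
  have hdiff : DifferentiableOn ℝ f sᶜ :=
    fun y hy => (hfg y hy).differentiableAt.differentiableWithinAt
  have hlim : Tendsto (deriv f) (𝓝[≠] x) (𝓝 (g x)) :=
    ((hg.tendsto x).mono_left nhdsWithin_le_nhds).congr'
      (eventually_of_mem hnear fun y hy => (hfg y hy).deriv.symm)
  have hright := hasDerivWithinAt_Ici_of_tendsto_deriv hdiff hf.continuousWithinAt
    (nhdsGT_le_nhdsNE x hnear) (hlim.mono_left (nhdsGT_le_nhdsNE x))
  have hleft := hasDerivWithinAt_Iic_of_tendsto_deriv hdiff hf.continuousWithinAt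
    (nhdsLT_le_nhdsNE x hnear) (hlim.mono_left (nhdsLT_le_nhdsNE x))
  simpa using hleft.union hright

lemma monotoneOn_Ici_of_hasDerivAt {f f' : ℝ → ℝ} {a : ℝ} (hf : ∀ x, HasDerivAt f (f' x) x)
    (hf' : ∀ x > a, 0 ≤ f' x) : MonotoneOn f (Ici a) :=
  monotoneOn_of_hasDerivWithinAt_nonneg (convex_Ici a)
    (continuous_iff_continuousAt.2 fun x => (hf x).continuousAt).continuousOn
    (fun x _ => (hf x).hasDerivWithinAt) (by simpa using hf')

lemma antitoneOn_Ici_of_hasDerivAt {f f' : ℝ → ℝ} {a : ℝ} (hf : ∀ x, HasDerivAt f (f' x) x)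
    (hf' : ∀ x > a, f' x ≤ 0) : AntitoneOn f (Ici a) :=
  antitoneOn_of_hasDerivWithinAt_nonpos (convex_Ici a)
    (continuous_iff_continuousAt.2 fun x => (hf x).continuousAt).continuousOn
    (fun x _ => (hf x).hasDerivWithinAt) (by simpa using hf')

lemma not_integrableOn_Ici_of_le {f : ℝ → ℝ} {a c : ℝ} (hc : 0 < c) (hf : ∀ x ≥ a, c ≤ f x) :
    ¬IntegrableOn f (Ici a) := by
  intro hint
  have : IntegrableOn (fun _ => c) (Ici a) :=
    hint.mono' aestronglyMeasurable_const <| (ae_restrict_iff' measurableSet_Ici).2 <|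
      ae_of_all _ fun x hx => by rw [Real.norm_of_nonneg hc.le]; exact hf x hx
  rw [integrableOn_const_iff] at this
  simp [hc.ne'] at this

lemma eq_zero_of_hasDerivAt_smul {F : Type*} [NormedAddCommGroup F] [NormedSpace ℝ F]
    {k : ℝ → ℝ} {u u' : ℝ → F} (hk : Continuous k)
    (hu : ∀ x, HasDerivAt u (u' x) x) (hu' : ∀ x, HasDerivAt u' (k x • u x) x) {t₀ : ℝ}
    (h₀ : u t₀ = 0) (h₀' : u' t₀ = 0) (x : ℝ) : u x = 0 := by
  set a := min x t₀ - 1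
  set b := max x t₀ + 1
  obtain ⟨C, hC⟩ : BddAbove ((fun t => ‖k t‖₊) '' Icc a b) :=
    (isCompact_Icc.image_of_continuousOn hk.nnnorm.continuousOn).bddAbove
  have hlip : ∀ t ∈ Ioo a b, LipschitzOnWith (max 1 C) (fun p : F × F => (p.2, k t • p.1)) univ :=
    fun t ht => (LipschitzWith.prod_snd.prodMk ((lipschitzWith_smul (k t)).comp
      LipschitzWith.prod_fst)).weaken (max_le_max le_rfl (by
        simpa using hC (mem_image_of_mem _ (Ioo_subset_Icc_self ht)))) |>.lipschitzOnWith
  have hx : x ∈ Ioo a b := ⟨by linarith [min_le_left x t₀], by linarith [le_max_left x t₀]⟩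
  have ht₀ : t₀ ∈ Ioo a b := ⟨by linarith [min_le_right x t₀], by linarith [le_max_right x t₀]⟩
  exact congrArg Prod.fst <| ODE_solution_unique_of_mem_Ioo (f := fun t => (u t, u' t))
    (g := fun _ => 0) hlip ht₀ (fun t _ => ⟨(hu t).prodMk (hu' t), mem_univ _⟩)
    (fun t _ => ⟨(hasDerivAt_const t 0).congr_deriv (by ext <;> simp), mem_univ _⟩)
    (by simp [h₀, h₀']) hx

section Decay

variable {F : Type*} [NormedAddCommGroup F] [InnerProductSpace ℝ F] {k : ℝ → ℝ} {u u' : ℝ → F}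
  {x₀ : ℝ}

lemma inner_nonpos_of_integrableOn (hu : ∀ x, HasDerivAt u (u' x) x)
    (hu' : ∀ x, HasDerivAt u' (k x • u x) x) (hk : ∀ x ≥ x₀, 0 ≤ k x)
    (hint : IntegrableOn (fun x => ‖u x‖ ^ 2) (Ici x₀)) {x₁ : ℝ} (hx₁ : x₀ ≤ x₁) :
    ⟪u x₁, u' x₁⟫ ≤ 0 := by
  by_contra! hpos
  have hmono : MonotoneOn (fun x => ⟪u x, u' x⟫) (Ici x₀) := by
    refine monotoneOn_Ici_of_hasDerivAt (fun x => (hu x).inner ℝ (hu' x)) fun x hx => ?_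
    rw [real_inner_smul_right, real_inner_self_eq_norm_sq, real_inner_self_eq_norm_sq]
    have := hk x hx.le
    positivity
  have hgrow : MonotoneOn (fun x => ‖u x‖ ^ 2) (Ici x₁) :=
    monotoneOn_Ici_of_hasDerivAt (fun x => (hu x).norm_sq) fun x hx =>
      mul_nonneg zero_le_two (hpos.le.trans (hmono hx₁ (hx₁.trans hx.le) hx.le))
  have hu₁ : 0 < ‖u x₁‖ ^ 2 := by
    have : u x₁ ≠ 0 := fun h => by simp [h] at hpos
    positivity
  exact not_integrableOn_Ici_of_le hu₁ (fun x hx => hgrow self_mem_Ici hx hx)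
    (hint.mono_set (Ici_subset_Ici.2 hx₁))

lemma tendsto_zero_of_integrableOn (hu : ∀ x, HasDerivAt u (u' x) x)
    (hu' : ∀ x, HasDerivAt u' (k x • u x) x) (hk : ∀ x ≥ x₀, 0 ≤ k x)
    (hint : IntegrableOn (fun x => ‖u x‖ ^ 2) (Ici x₀)) : Tendsto u atTop (𝓝 0) := by
  have hanti : AntitoneOn (fun x => ‖u x‖ ^ 2) (Ici x₀) :=
    antitoneOn_Ici_of_hasDerivAt (fun x => (hu x).norm_sq) fun x hx =>
      mul_nonpos_of_nonneg_of_nonpos zero_le_two (inner_nonpos_of_integrableOn hu hu' hk hint hx.le)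
  refine NormedAddGroup.tendsto_nhds_zero.2 fun ε hε => ?_
  obtain ⟨X, hX, hXε⟩ : ∃ X ≥ x₀, ‖u X‖ ^ 2 < ε ^ 2 := by
    by_contra! h
    exact not_integrableOn_Ici_of_le (by positivity) h hint
  filter_upwards [eventually_ge_atTop X] with x hx
  exact (pow_lt_pow_iff_left₀ (norm_nonneg _) hε.le two_ne_zero).1
    ((hanti hX (hX.trans hx) hx).trans_lt hXε)

lemma isBoundedUnder_norm_of_integrableOn (hu : ∀ x, HasDerivAt u (u' x) x)
    (hu' : ∀ x, HasDerivAt u' (k x • u x) x) (hk : ∀ x ≥ x₀, 0 ≤ k x)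
    (hint : IntegrableOn (fun x => ‖u x‖ ^ 2) (Ici x₀)) :
    IsBoundedUnder (· ≤ ·) atTop (fun x => ‖u' x‖) := by
  have hanti : AntitoneOn (fun x => ‖u' x‖ ^ 2) (Ici x₀) := by
    refine antitoneOn_Ici_of_hasDerivAt (fun x => (hu' x).norm_sq) fun x hx => ?_
    rw [real_inner_smul_right, real_inner_comm]
    exact mul_nonpos_of_nonneg_of_nonpos zero_le_two (mul_nonpos_of_nonneg_of_nonpos (hk x hx.le)
      (inner_nonpos_of_integrableOn hu hu' hk hint hx.le))
  refine isBoundedUnder_of_eventually_le (a := ‖u' x₀‖) ?_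
  filter_upwards [eventually_ge_atTop x₀] with x hx
  exact (pow_le_pow_iff_left₀ (norm_nonneg _) (norm_nonneg _) two_ne_zero).1
    (hanti self_mem_Ici hx hx)

end Decay

section Wronskian

variable {𝕜 : Type*} [NormedField 𝕜] [NormedAlgebra ℝ 𝕜] {k : ℝ → ℝ} {u₁ u₁' u₂ u₂' : ℝ → 𝕜}

lemma hasDerivAt_wronskian (hu₁ : ∀ x, HasDerivAt u₁ (u₁' x) x)
    (hu₁' : ∀ x, HasDerivAt u₁' (k x • u₁ x) x) (hu₂ : ∀ x, HasDerivAt u₂ (u₂' x) x)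
    (hu₂' : ∀ x, HasDerivAt u₂' (k x • u₂ x) x) (x : ℝ) :
    HasDerivAt (fun y => u₁ y * u₂' y - u₂ y * u₁' y) 0 x :=
  (((hu₁ x).mul (hu₂' x)).sub ((hu₂ x).mul (hu₁' x))).congr_deriv (by
    simp only [Algebra.smul_def]; ring)

lemma exists_linear_dependence_of_wronskian_eq_zero (hk : Continuous k)
    (hu₁ : ∀ x, HasDerivAt u₁ (u₁' x) x) (hu₁' : ∀ x, HasDerivAt u₁' (k x • u₁ x) x)
    (hu₂ : ∀ x, HasDerivAt u₂ (u₂' x) x) (hu₂' : ∀ x, HasDerivAt u₂' (k x • u₂ x) x)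
    (hW : ∀ x, u₁ x * u₂' x - u₂ x * u₁' x = 0) :
    ∃ c₁ c₂ : 𝕜, ¬(c₁ = 0 ∧ c₂ = 0) ∧ ∀ x, c₁ * u₁ x + c₂ * u₂ x = 0 := by
  by_cases h : ∀ x, u₁ x = 0
  · exact ⟨1, 0, by simp, fun x => by simp [h x]⟩
  push Not at h
  obtain ⟨p, hp⟩ := h
  set c := u₂ p / u₁ p with hc
  refine ⟨-c, 1, by simp, fun x => ?_⟩
  have hv : ∀ x, HasDerivAt (fun y => u₂ y - c * u₁ y) (u₂' x - c * u₁' x) x :=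
    fun x => (hu₂ x).sub ((hu₁ x).const_mul c)
  have hv' : ∀ x, HasDerivAt (fun y => u₂' y - c * u₁' y) (k x • (u₂ x - c * u₁ x)) x :=
    fun x => ((hu₂' x).sub ((hu₁' x).const_mul c)).congr_deriv (by rw [smul_sub, mul_smul_comm])
  have hv₀ : u₂ p - c * u₁ p = 0 := by simp [c, hp]
  have hv₀' : u₂' p - c * u₁' p = 0 := by
    calc u₂' p - c * u₁' p = (u₁ p * u₂' p - u₂ p * u₁' p) / u₁ p := by
          rw [eq_div_iff hp, hc]; field_simp
      _ = 0 := by rw [hW p, zero_div]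
  linear_combination eq_zero_of_hasDerivAt_smul hk hv hv' hv₀ hv₀' x

end Wronskian

lemma wronskian_eq_zero_of_integrableOn {k : ℝ → ℝ} {u₁ u₁' u₂ u₂' : ℝ → ℂ} {x₀ : ℝ}
    (hu₁ : ∀ x, HasDerivAt u₁ (u₁' x) x) (hu₁' : ∀ x, HasDerivAt u₁' (k x • u₁ x) x)
    (hu₂ : ∀ x, HasDerivAt u₂ (u₂' x) x) (hu₂' : ∀ x, HasDerivAt u₂' (k x • u₂ x) x)
    (hk : ∀ x ≥ x₀, 0 ≤ k x) (hint₁ : IntegrableOn (fun x => ‖u₁ x‖ ^ 2) (Ici x₀))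
    (hint₂ : IntegrableOn (fun x => ‖u₂ x‖ ^ 2) (Ici x₀)) (x : ℝ) :
    u₁ x * u₂' x - u₂ x * u₁' x = 0 := by
  have hW := hasDerivAt_wronskian hu₁ hu₁' hu₂ hu₂'
  have hconst := is_const_of_deriv_eq_zero (fun y => (hW y).differentiableAt)
    (fun y => (hW y).deriv) x
  have hlim : Tendsto (fun y => u₁ y * u₂' y - u₂ y * u₁' y) atTop (𝓝 0) := by
    simpa using ((tendsto_zero_of_integrableOn hu₁ hu₁' hk hint₁).zero_mul_isBoundedUnder_le
      (isBoundedUnder_norm_of_integrableOn hu₂ hu₂' hk hint₂)).sub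
      ((tendsto_zero_of_integrableOn hu₂ hu₂' hk hint₂).zero_mul_isBoundedUnder_le
      (isBoundedUnder_norm_of_integrableOn hu₁ hu₁' hk hint₁))
  exact tendsto_nhds_unique (tendsto_const_nhds.congr hconst) hlim

noncomputable def harmonicWell (a b ℓ x : ℝ) : ℝ :=
  if x < 0 then a * x ^ 2 else if x ≤ ℓ then 0 else b * (x - ℓ) ^ 2

section harmonicWell

variable {a b ℓ : ℝ}

lemma harmonicWell_eq_min_max (hℓ : 0 ≤ ℓ) :
    harmonicWell a b ℓ = fun x => a * min x 0 ^ 2 + b * max (x - ℓ) 0 ^ 2 := by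
  funext x
  unfold harmonicWell
  split_ifs with h₀ hℓx
  · rw [min_eq_left h₀.le, max_eq_right (by linarith)]; ring
  · rw [min_eq_right (not_lt.1 h₀), max_eq_right (by linarith)]; ring
  · rw [min_eq_right (not_lt.1 h₀), max_eq_left (by linarith)]; ring

lemma continuous_harmonicWell (hℓ : 0 ≤ ℓ) : Continuous (harmonicWell a b ℓ) := by
  rw [harmonicWell_eq_min_max hℓ]
  fun_prop

lemma tendsto_harmonicWell_atTop (hb : 0 < b) : Tendsto (harmonicWell a b ℓ) atTop atTop := by
  have hsq : Tendsto (fun x => b * (x - ℓ) ^ 2) atTop atTop :=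
    ((tendsto_pow_atTop two_ne_zero).comp
      (tendsto_atTop_add_const_right _ (-ℓ) tendsto_id)).const_mul_atTop hb
  refine hsq.congr' ?_
  filter_upwards [eventually_gt_atTop (max ℓ 0)] with x hx
  rw [max_lt_iff] at hx
  simp [harmonicWell, hx.2.not_gt, hx.1.not_ge]

end harmonicWell

lemma hasDerivAt_deriv_of_schrodinger {m hb E ℓ : ℝ} {V : ℝ → ℝ} {u : ℝ → ℂ} (hm : m ≠ 0)
    (hhb : hb ≠ 0) (hV : Continuous V) (hu : ContDiff ℝ 1 u)
    (hode : ∀ x : ℝ, (x < 0 ∨ (0 < x ∧ x < ℓ) ∨ ℓ < x) →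
        DifferentiableAt ℝ (deriv u) x ∧
        -((hb^2/(2*m) : ℝ) : ℂ) * deriv (deriv u) x + ((V x : ℝ) : ℂ) * u x
          = ((E : ℝ) : ℂ) * u x) (x : ℝ) :
    HasDerivAt (deriv u) ((2 * m / hb ^ 2 * (V x - E)) • u x) x := by
  have hu₀ := hu.continuous
  refine hasDerivAt_of_hasDerivAt_of_notMem_finite (s := {0, ℓ})
    (g := fun x => (2 * m / hb ^ 2 * (V x - E)) • u x) (toFinite _) (fun x hx => ?_)
    (hu.continuous_deriv le_rfl) (by fun_prop) x
  simp only [mem_insert_iff, mem_singleton_iff, not_or] at hx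
  obtain ⟨hdiff, heq⟩ := hode x (by grind)
  refine hdiff.hasDerivAt.congr_deriv ?_
  have hm' : (m : ℂ) ≠ 0 := by exact_mod_cast hm
  have hhb' : (hb : ℂ) ≠ 0 := by exact_mod_cast hhb
  rw [Complex.real_smul]
  push_cast at heq ⊢
  field_simp at heq ⊢
  linear_combination -heq

theorem stmt1
    (m ℓ ωm ωp : ℝ) (hm : 0 < m) (hℓ : 0 ≤ ℓ) (hωp : 0 < ωp)
    (V : ℝ → ℝ)
    (hV : ∀ x : ℝ, V x = if x < 0 then (1/2) * m * ωm^2 * x^2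
          else if x ≤ ℓ then 0 else (1/2) * m * ωp^2 * (x - ℓ)^2)
    (hb : ℝ) (hhb : 0 < hb) (E : ℝ)
    (u₁ u₂ : ℝ → ℂ)
    (h₁ : MemLp u₁ 2 volume) (h₂ : MemLp u₂ 2 volume)
    (h₁' : ContDiff ℝ 1 u₁) (h₂' : ContDiff ℝ 1 u₂)
    (hode₁ : ∀ x : ℝ, (x < 0 ∨ (0 < x ∧ x < ℓ) ∨ ℓ < x) →
        DifferentiableAt ℝ (deriv u₁) x ∧
        -((hb^2/(2*m) : ℝ) : ℂ) * deriv (deriv u₁) x + ((V x : ℝ) : ℂ) * u₁ x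
          = ((E : ℝ) : ℂ) * u₁ x)
    (hode₂ : ∀ x : ℝ, (x < 0 ∨ (0 < x ∧ x < ℓ) ∨ ℓ < x) →
        DifferentiableAt ℝ (deriv u₂) x ∧
        -((hb^2/(2*m) : ℝ) : ℂ) * deriv (deriv u₂) x + ((V x : ℝ) : ℂ) * u₂ x
          = ((E : ℝ) : ℂ) * u₂ x) :
    ∃ c₁ c₂ : ℂ, ¬(c₁ = 0 ∧ c₂ = 0) ∧ ∀ x : ℝ, c₁ * u₁ x + c₂ * u₂ x = 0 := by
  have hV' : V = harmonicWell (1/2 * m * ωm ^ 2) (1/2 * m * ωp ^ 2) ℓ := funext hV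
  have hVc : Continuous V := hV' ▸ continuous_harmonicWell hℓ
  have hu₁ : ∀ x, HasDerivAt u₁ (deriv u₁ x) x :=
    fun x => (h₁'.differentiable one_ne_zero x).hasDerivAt
  have hu₂ : ∀ x, HasDerivAt u₂ (deriv u₂ x) x :=
    fun x => (h₂'.differentiable one_ne_zero x).hasDerivAt
  have hu₁' := hasDerivAt_deriv_of_schrodinger hm.ne' hhb.ne' hVc h₁' hode₁
  have hu₂' := hasDerivAt_deriv_of_schrodinger hm.ne' hhb.ne' hVc h₂' hode₂
  obtain ⟨x₀, hx₀⟩ := eventually_atTop.1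
    ((hV' ▸ tendsto_harmonicWell_atTop (by positivity)).eventually_ge_atTop E)
  have hk : ∀ x ≥ x₀, 0 ≤ 2 * m / hb ^ 2 * (V x - E) :=
    fun x hx => mul_nonneg (by positivity) (sub_nonneg.2 (hx₀ x hx))
  have hint : ∀ u : ℝ → ℂ, MemLp u 2 volume → IntegrableOn (fun x => ‖u x‖ ^ 2) (Ici x₀) :=
    fun u hu => ((memLp_two_iff_integrable_sq_norm hu.1).1 hu).integrableOn
  exact exists_linear_dependence_of_wronskian_eq_zero (by fun_prop) hu₁ hu₁' hu₂ hu₂'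
    (wronskian_eq_zero_of_integrableOn hu₁ hu₁' hu₂ hu₂' hk (hint _ h₁) (hint _ h₂))
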